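/- arXiv:1605.09323 — 2 statements merged into one kernel-verified Lean document; each statement's English description precedes it below -/
import Mathlib

section
/- Let p be an odd prime and χ a nontrivial Dirichlet character mod p. Then |L(2,χ)| ≤ |Σ_{n=1}^{(p-1)/2} χ(n)/n²| + 24√p·ln(p)/(p+1)², where L(2,χ) = Σ_{n≥1} χ(n)/n². -/
/-!
Split `L(2, χ)` after `m = (p - 1) / 2` terms. The tail `∑_{n > m} χ(n) n⁻²` is bounded by
partial summation against the antitone weights `n⁻²`: it is at most the largest weight
`(m + 1)⁻² = 4 / (p + 1)²` times a uniform bound on the character sums `∑_{a ≤ n < b} χ(n)`.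

That uniform bound is Pólya–Vinogradov, `√p (1 + log p)`. Expanding `χ` through the Gauss sum,
`χ(n) τ(χ⁻¹) = ∑_j χ⁻¹(j) e(jn/p)` with `|τ(χ⁻¹)| = √p`, turns a character sum into a combination
of geometric sums, and `|∑_{a ≤ n < b} e(jn/p)| ≤ 2 / |e(j/p) - 1| = 1 / sin(πj/p)`. Jordan's
inequality gives `sin(πt) ≥ 2t(1 - t)`, so these sum over `0 < j < p` to at most
`p · H_p ≤ p (1 + log p)`. Finally `1 + log p ≤ 6 log p` because `log 2 > 1/5`.
-/

open Finset Real

theorem Real.two_mul_mul_one_sub_le_sin_pi_mul {t : ℝ} (h0 : 0 ≤ t) (h1 : t ≤ 1) :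
    2 * t * (1 - t) ≤ sin (π * t) := by
  wlog ht : t ≤ 1 / 2 generalizing t
  · have := this (t := 1 - t) (by linarith) (by linarith) (by linarith)
    rw [mul_one_sub π t, sin_pi_sub] at this
    linarith
  have := mul_le_sin (by positivity) (by nlinarith [pi_pos] : π * t ≤ π / 2)
  rw [← mul_assoc, div_mul_cancel₀ _ pi_ne_zero] at this
  nlinarith

-- The `a = 0` term is `n⁻¹`, as `(0 : ℝ)⁻¹ = 0`.
theorem sum_range_inv_add_inv_sub_le (n : ℕ) :
    ∑ a ∈ range n, ((a : ℝ)⁻¹ + ((n : ℝ) - a)⁻¹) ≤ 2 * (1 + log n) := by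
  rcases n with _ | n
  · simp
  have hH := harmonic_le_one_add_log (n + 1)
  have h1 : ∑ a ∈ range (n + 1), (a : ℝ)⁻¹ = harmonic n := by
    rw [sum_range_succ', harmonic]; simp
  have h2 : ∑ a ∈ range (n + 1), (((n + 1 : ℕ) : ℝ) - a)⁻¹ = harmonic (n + 1) := by
    rw [← sum_range_reflect, harmonic]; push_cast
    refine sum_congr rfl fun a ha => ?_
    rw [Nat.cast_sub (by grind)]; ring_nf
  have h3 : (harmonic n : ℝ) ≤ harmonic (n + 1) := by
    rw [harmonic_succ]; push_cast; exact le_add_of_nonneg_right (by positivity)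
  rw [sum_add_distrib, h1, h2]
  linarith

theorem norm_sum_Ico_pow_le {K : Type*} [NormedDivisionRing K] {z : K} (hz : ‖z‖ = 1)
    (hz1 : z ≠ 1) (m n : ℕ) : ‖∑ i ∈ Ico m n, z ^ i‖ ≤ 2 / ‖z - 1‖ := by
  rcases le_total m n with hmn | hnm
  · rw [geom_sum_Ico hz1 hmn, norm_div]
    gcongr
    calc ‖z ^ n - z ^ m‖ ≤ ‖z ^ n‖ + ‖z ^ m‖ := norm_sub_le _ _
      _ = 2 := by rw [norm_pow, norm_pow, hz]; norm_num
  · rw [Ico_eq_empty_of_le hnm, sum_empty, norm_zero]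
    positivity

lemma ZMod.sum_val_eq_sum_range {M : Type*} [AddCommMonoid M] (n : ℕ) [NeZero n] (f : ℕ → M) :
    ∑ j : ZMod n, f j.val = ∑ a ∈ range n, f a := by
  obtain ⟨k, rfl⟩ := Nat.exists_eq_succ_of_ne_zero (NeZero.ne n)
  exact Fin.sum_univ_eq_sum_range f (k + 1)

theorem ZMod.norm_stdAddChar_sub_one {N : ℕ} [NeZero N] (j : ZMod N) :
    ‖stdAddChar j - 1‖ = 2 * sin (π * j.val / N) := by
  have hN : (0 : ℝ) < N := by exact_mod_cast Nat.pos_of_neZero N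
  have hj : (j.val : ℝ) ≤ N := by exact_mod_cast j.val_lt.le
  have hsin : 0 ≤ sin (π * j.val / N) := by
    apply sin_nonneg_of_nonneg_of_le_pi (by positivity)
    rw [div_le_iff₀ hN]; nlinarith [pi_pos]
  rw [stdAddChar_apply, toCircle_apply,
    show 2 * π * Complex.I * j.val / N = Complex.I * (2 * (π * j.val / N) : ℝ) by push_cast; ring,
    Complex.norm_exp_I_mul_ofReal_sub_one, mul_div_cancel_left₀ _ two_ne_zero, Real.norm_eq_abs,
    abs_of_nonneg (by positivity)]

theorem ZMod.two_div_norm_stdAddChar_sub_one_le {N : ℕ} [NeZero N] {j : ZMod N} (hj : j ≠ 0) :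
    2 / ‖stdAddChar j - 1‖ ≤ N / 2 * ((j.val : ℝ)⁻¹ + ((N : ℝ) - j.val)⁻¹) := by
  have hN : (0 : ℝ) < N := by exact_mod_cast Nat.pos_of_neZero N
  have ha : (0 : ℝ) < j.val := by exact_mod_cast Nat.pos_of_ne_zero ((val_ne_zero j).mpr hj)
  have haN : (j.val : ℝ) < N := by exact_mod_cast j.val_lt
  have hsin := two_mul_mul_one_sub_le_sin_pi_mul (t := j.val / N) (by positivity)
    ((div_le_one hN).mpr haN.le)
  have hpos : 0 < 2 * (j.val / N : ℝ) * (1 - j.val / N) := by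
    have : (j.val / N : ℝ) < 1 := (div_lt_one hN).mpr haN
    have : (0 : ℝ) < j.val / N := by positivity
    nlinarith
  rw [norm_stdAddChar_sub_one, mul_div_assoc π]
  calc 2 / (2 * sin (π * (j.val / N)))
      ≤ 2 / (2 * (2 * (j.val / N : ℝ) * (1 - j.val / N))) := by gcongr
    _ = N / 2 * ((j.val : ℝ)⁻¹ + ((N : ℝ) - j.val)⁻¹) := by
      have : (N : ℝ) - j.val ≠ 0 := by linarith
      field_simp
      ring

theorem norm_gaussSum_eq_sqrt_card {F : Type*} [Field F] [Fintype F] {χ : MulChar F ℂ}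
    (hχ : χ ≠ 1) {ψ : AddChar F ℂ} (hψ : ψ.IsPrimitive) :
    ‖gaussSum χ ψ‖ = √(Fintype.card F) := by
  have h := gaussSum_mul_gaussSum_eq_card hχ hψ
  rw [← star_gaussSum_eq, RCLike.star_def, Complex.mul_conj'] at h
  rw [eq_comm, sqrt_eq_iff_eq_sq (by positivity) (norm_nonneg _)]
  exact_mod_cast h.symm

theorem mul_gaussSum_inv_eq_gaussSum_mulShift {F : Type*} [Field F] [Fintype F] {R : Type*}
    [CommRing R] [IsDomain R] {χ : MulChar F R} (hχ : χ ≠ 1) (ψ : AddChar F R) (a : F) :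
    χ a * gaussSum χ⁻¹ ψ = gaussSum χ⁻¹ (ψ.mulShift a) := by
  rcases eq_or_ne a 0 with rfl | ha
  · rw [MulChar.map_zero, zero_mul, AddChar.mulShift_zero, gaussSum_one_right (inv_ne_one.mpr hχ)]
  · rw [← Units.val_mk0 ha, gaussSum_mulShift_eq, inv_inv]

theorem DirichletCharacter.norm_sum_Ico_le {p : ℕ} [Fact p.Prime] {χ : DirichletCharacter ℂ p}
    (hχ : χ ≠ 1) (m n : ℕ) : ‖∑ k ∈ Ico m n, χ k‖ ≤ √p * (1 + log p) := by
  have hp : (0 : ℝ) < p := by exact_mod_cast (Fact.out : p.Prime).pos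
  have hτ : ‖gaussSum χ⁻¹ (ZMod.stdAddChar (N := p))‖ = √p := by
    simpa [ZMod.card] using
      norm_gaussSum_eq_sqrt_card (inv_ne_one.mpr hχ) (ZMod.isPrimitive_stdAddChar p)
  have hexpand : (∑ k ∈ Ico m n, χ k) * gaussSum χ⁻¹ ZMod.stdAddChar
      = ∑ j, χ⁻¹ j * ∑ k ∈ Ico m n, ZMod.stdAddChar j ^ k := by
    simp_rw [sum_mul, mul_gaussSum_inv_eq_gaussSum_mulShift hχ, gaussSum,
      AddChar.mulShift_apply, mul_sum]
    rw [sum_comm]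
    refine sum_congr rfl fun j _ => sum_congr rfl fun k _ => ?_
    rw [← AddChar.map_nsmul_eq_pow, nsmul_eq_mul]
  have hterm (j : ZMod p) : ‖χ⁻¹ j * ∑ k ∈ Ico m n, ZMod.stdAddChar j ^ k‖
      ≤ p / 2 * ((j.val : ℝ)⁻¹ + ((p : ℝ) - j.val)⁻¹) := by
    rcases eq_or_ne j 0 with rfl | hj
    · simp only [MulChar.map_zero, zero_mul, norm_zero, ZMod.val_zero, CharP.cast_eq_zero, inv_zero,
        sub_zero, zero_add]
      positivity
    · have hψ : ZMod.stdAddChar j ≠ 1 := by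
        rwa [← AddChar.map_zero_eq_one (ZMod.stdAddChar (N := p)), ZMod.injective_stdAddChar.ne_iff]
      calc ‖χ⁻¹ j * ∑ k ∈ Ico m n, ZMod.stdAddChar j ^ k‖
          ≤ ‖∑ k ∈ Ico m n, ZMod.stdAddChar j ^ k‖ := by
            rw [norm_mul]
            exact mul_le_of_le_one_left (norm_nonneg _) (χ⁻¹.norm_le_one j)
        _ ≤ 2 / ‖ZMod.stdAddChar j - 1‖ := norm_sum_Ico_pow_le (Circle.norm_coe _) hψ m n
        _ ≤ _ := ZMod.two_div_norm_stdAddChar_sub_one_le hj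
  refine le_of_mul_le_mul_left ?_ (sqrt_pos.mpr hp)
  calc √p * ‖∑ k ∈ Ico m n, χ k‖ = ‖(∑ k ∈ Ico m n, χ k) * gaussSum χ⁻¹ ZMod.stdAddChar‖ := by
        rw [norm_mul, hτ, mul_comm]
    _ ≤ ∑ j : ZMod p, p / 2 * ((j.val : ℝ)⁻¹ + ((p : ℝ) - j.val)⁻¹) :=
      hexpand ▸ (norm_sum_le _ _).trans (sum_le_sum fun j _ => hterm j)
    _ = p / 2 * ∑ a ∈ range p, ((a : ℝ)⁻¹ + ((p : ℝ) - a)⁻¹) := by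
      rw [← mul_sum, ZMod.sum_val_eq_sum_range p (fun a => ((a : ℝ)⁻¹ + ((p : ℝ) - a)⁻¹))]
    _ ≤ p / 2 * (2 * (1 + log p)) := by gcongr; exact sum_range_inv_add_inv_sub_le p
    _ = √p * (√p * (1 + log p)) := by rw [← mul_assoc √(p : ℝ), mul_self_sqrt hp.le]; ring

theorem norm_sum_range_smul_le_of_antitone {E : Type*} [NormedAddCommGroup E] [NormedSpace ℝ E]
    {b : ℕ → ℝ} (hb : Antitone b) (hb0 : ∀ n, 0 ≤ b n) {g : ℕ → E} {C : ℝ}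
    (hg : ∀ n, ‖∑ i ∈ range n, g i‖ ≤ C) (n : ℕ) :
    ‖∑ i ∈ range n, b i • g i‖ ≤ C * b 0 := by
  rw [sum_range_by_parts]
  calc _ ≤ ‖b (n - 1) • ∑ i ∈ range n, g i‖
        + ‖∑ i ∈ range (n - 1), (b (i + 1) - b i) • ∑ j ∈ range (i + 1), g j‖ := norm_sub_le _ _
    _ ≤ b (n - 1) * C + ∑ i ∈ range (n - 1), (b i - b (i + 1)) * C := by
      gcongr
      · rw [norm_smul, Real.norm_of_nonneg (hb0 _)]
        exact mul_le_mul_of_nonneg_left (hg n) (hb0 _)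
      · refine (norm_sum_le _ _).trans (sum_le_sum fun i _ => ?_)
        rw [norm_smul, Real.norm_of_nonpos (sub_nonpos.mpr (hb i.le_succ)), neg_sub]
        exact mul_le_mul_of_nonneg_left (hg _) (sub_nonneg.mpr (hb i.le_succ))
    _ = C * b 0 := by rw [← sum_mul, sum_range_sub']; ring

theorem norm_tsum_smul_le_of_antitone {E : Type*} [NormedAddCommGroup E] [NormedSpace ℝ E]
    {b : ℕ → ℝ} (hb : Antitone b) (hb0 : ∀ n, 0 ≤ b n) {g : ℕ → E} {C : ℝ}
    (hg : ∀ n, ‖∑ i ∈ range n, g i‖ ≤ C) :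
    ‖∑' i, b i • g i‖ ≤ C * b 0 := by
  by_cases hs : Summable fun i => b i • g i
  · exact le_of_tendsto' hs.hasSum.tendsto_sum_nat.norm
      (norm_sum_range_smul_le_of_antitone hb hb0 hg)
  · rw [tsum_eq_zero_of_not_summable hs, norm_zero]
    exact mul_nonneg ((norm_nonneg _).trans (hg 0)) (hb0 0)

theorem DirichletCharacter.summable_div_sq {N : ℕ} (χ : DirichletCharacter ℂ N) :
    Summable fun n : ℕ => χ n / (n : ℂ) ^ 2 := by
  refine .of_norm_bounded (Real.summable_one_div_nat_pow.mpr one_lt_two) fun n => ?_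
  rw [norm_div, norm_pow, Complex.norm_natCast]
  exact div_le_div_of_nonneg_right (χ.norm_le_one _) (by positivity)

theorem DirichletCharacter.norm_tsum_div_sq_nat_add_le {p : ℕ} [Fact p.Prime]
    {χ : DirichletCharacter ℂ p} (hχ : χ ≠ 1) {m : ℕ} (hm : 0 < m) :
    ‖∑' i : ℕ, χ ↑(i + m) / ((i + m : ℕ) : ℂ) ^ 2‖ ≤ √p * (1 + log p) / m ^ 2 := by
  have hb : Antitone fun i : ℕ => ((((i + m : ℕ) : ℝ)) ^ 2)⁻¹ := fun i j hij => by
    have : (0 : ℝ) < (i + m : ℕ) := by exact_mod_cast Nat.add_pos_right i hm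
    dsimp only
    gcongr
  have hg (n : ℕ) : ‖∑ i ∈ range n, χ ↑(i + m)‖ ≤ √p * (1 + log p) := by
    rw [range_eq_Ico, sum_Ico_add' (fun k : ℕ => χ k), zero_add]
    exact norm_sum_Ico_le hχ m (n + m)
  convert norm_tsum_smul_le_of_antitone hb (fun _ => by positivity) hg using 1
  · simp_rw [Complex.real_smul, div_eq_inv_mul, Complex.ofReal_inv, Complex.ofReal_pow,
      Complex.ofReal_natCast]
  · rw [zero_add, div_eq_mul_inv]

/-- For an odd prime `p` and a nontrivial Dirichlet character `χ` mod `p`,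
`|L(2,χ)| ≤ |∑_{n=1}^{(p-1)/2} χ(n)/n²| + 24·√p·ln p/(p+1)²`,
where `L(2,χ) = ∑_{n ≥ 1} χ(n)/n²`. -/
theorem abs_L_two_le (p : ℕ) [Fact p.Prime] (hp : Odd p)
    (χ : DirichletCharacter ℂ p) (hχ : χ ≠ 1) :
    ‖∑' n : ℕ, χ n / (n : ℂ) ^ 2‖ ≤
      ‖∑ n ∈ Finset.Icc 1 ((p - 1) / 2), χ n / (n : ℂ) ^ 2‖ +
        24 * Real.sqrt p * Real.log p / ((p : ℝ) + 1) ^ 2 := by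
  obtain ⟨m, hm⟩ := hp
  have hhalf : (p - 1) / 2 = m := by omega
  have hp1 : (p : ℝ) + 1 = 2 * ((m + 1 : ℕ) : ℝ) := by rw [hm]; push_cast; ring
  have hlog : 1 + log p ≤ 6 * log p := by
    have h2 : (2 : ℝ) ≤ p := by exact_mod_cast (Fact.out : p.Prime).two_le
    linarith [log_two_gt_d9, log_le_log two_pos h2]
  rw [hhalf, ← χ.summable_div_sq.sum_add_tsum_nat_add (m + 1), range_eq_Ico,
    sum_eq_sum_Ico_succ_bot (by omega : 0 < m + 1), zero_add, Ico_add_one_right_eq_Icc,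
    Nat.cast_zero, MulChar.map_zero, zero_div, zero_add]
  refine (norm_add_le _ _).trans (add_le_add_right ?_ _)
  calc _ ≤ √p * (1 + log p) / ((m + 1 : ℕ) : ℝ) ^ 2 :=
        χ.norm_tsum_div_sq_nat_add_le hχ m.succ_pos
    _ = 4 * (√p * (1 + log p)) / ((p : ℝ) + 1) ^ 2 := by rw [hp1]; ring
    _ ≤ 4 * (√p * (6 * log p)) / ((p : ℝ) + 1) ^ 2 := by gcongr
    _ = 24 * √p * log p / ((p : ℝ) + 1) ^ 2 := by ring
end

section
/- Let p be an odd prime and ω the Teichmüller character mod p (values in ℤ_p). For 1 ≤ j ≤ (p-3)/2 with 4j+2 not divisible by p-1, we have B'_{2,ω^{4j}} := p·Σ_{a=1}^{p-1} ω(a)^{4j}·B₂(a/p) ≡ (1-4j)·b_{4j+2} + 4j·b_{4j+1+p} mod p in ℤ_p, where B₂(x) = x² - x + 1/6 is the second Bernoulli polynomial and b_n are Bernoulli numbers. -/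
/-!
Since `ω(a)^p = ω(a)` and `ω(a) ≡ a (mod p)`, we get `ω(a) ≡ a^p (mod p²)`, and expanding `(a^p)^k`
to first order around `a^k` (using `a^p ≡ a (mod p)`) gives
`ω(a)^k a² ≡ (1 - k) a^(k+2) + k a^(k+1+p) (mod p²)`.
As `p·B₂(a/p) = a²/p - a + p/6`, the claim reduces to the congruences
`∑_{a<p} a^n ≡ p·b_n (mod p²)` for even `n` and `∑_{a<p} a^n ≡ 0 (mod p)` for odd `n > 1`.
Both follow from Faulhaber's formula, whose remaining terms are small because `‖b_i‖ ≤ p`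
by von Staudt–Clausen.
-/

open Finset

namespace IsUltrametricDist

variable {S : Type*} [SeminormedAddCommGroup S] [IsUltrametricDist S] {x y : S} {r : ℝ}

theorem norm_add_le_of_le (hx : ‖x‖ ≤ r) (hy : ‖y‖ ≤ r) : ‖x + y‖ ≤ r :=
  (norm_add_le_max x y).trans (max_le hx hy)

theorem norm_sub_le_of_le (hx : ‖x‖ ≤ r) (hy : ‖y‖ ≤ r) : ‖x - y‖ ≤ r := by
  rw [sub_eq_add_neg]
  exact norm_add_le_of_le hx (by rwa [norm_neg])

theorem norm_natCast_mul_le {R : Type*} [SeminormedRing R] [NormOneClass R] [IsUltrametricDist R]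
    (n : ℕ) (x : R) : ‖(n : R) * x‖ ≤ ‖x‖ :=
  (norm_mul_le _ _).trans (mul_le_of_le_one_left (norm_nonneg x) (norm_natCast_le_one R n))

end IsUltrametricDist

theorem sub_sq_dvd_mul_pow_sub_pow_sub {R : Type*} [CommRing R] (y z : R) (k : ℕ) :
    (y - z) ^ 2 ∣ z * (y ^ k - z ^ k) - k * z ^ k * (y - z) := by
  induction k with
  | zero => simp
  | succ k ih =>
    have h : z * (y ^ (k + 1) - z ^ (k + 1)) - (k + 1 : ℕ) * z ^ (k + 1) * (y - z) =
        y * (z * (y ^ k - z ^ k) - k * z ^ k * (y - z)) + k * z ^ k * (y - z) ^ 2 := by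
      push_cast; ring
    rw [h]
    exact dvd_add (dvd_mul_of_dvd_right ih y) (dvd_mul_left _ _)

theorem sum_Icc_pow_eq_sum_range_pow {R : Type*} [Semiring R] (N : ℕ) {n : ℕ} (hn : n ≠ 0) :
    ∑ a ∈ Icc 1 (N - 1), (a : R) ^ n = ∑ a ∈ range N, (a : R) ^ n := by
  rcases Nat.eq_zero_or_pos N with rfl | hN
  · simp
  · rw [sum_range_eq_add_Ico _ hN, Nat.cast_zero, zero_pow hn, zero_add]
    refine sum_congr ?_ fun _ _ => rfl
    ext a
    simp only [mem_Icc, mem_Ico]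
    omega

/-- The `i`-th summand of Faulhaber's formula for `∑_{a<N} a^n`, with Mathlib's
`(n+1).choose i / (n+1)` rewritten as `n.choose i / (n+1-i)`, which exposes its `p`-adic size. -/
def faulhaberTerm (N n i : ℕ) : ℚ :=
  bernoulli i * n.choose i * (N : ℚ) ^ (n + 1 - i) / (n + 1 - i : ℕ)

theorem sum_range_pow_sub_mul_bernoulli (N n : ℕ) :
    ∑ a ∈ range N, (a : ℚ) ^ n - N * bernoulli n = ∑ i ∈ range n, faulhaberTerm N n i := by
  have htop : bernoulli n * ((n + 1).choose n : ℕ) * (N : ℚ) ^ (n + 1 - n) / (n + 1) =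
      N * bernoulli n := by
    rw [Nat.choose_succ_self_right, add_tsub_cancel_left, pow_one]
    field_simp
    push_cast
    ring
  rw [sum_range_pow, sum_range_succ, htop, add_sub_cancel_right]
  refine sum_congr rfl fun i hi => ?_
  have hi : i < n + 1 := by have := mem_range.1 hi; omega
  have hchoose : ((n.choose i * (n + 1) : ℕ) : ℚ) = ((n + 1).choose i * (n + 1 - i) : ℕ) := by
    rw [Nat.choose_mul_succ_eq]
  rw [faulhaberTerm, div_eq_div_iff (by positivity) (by simp; omega)]
  push_cast at hchoose ⊢
  linear_combination -(bernoulli i * (N : ℚ) ^ (n + 1 - i)) * hchoose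

theorem min_three_le_sub_padicValNat {p : ℕ} (hp5 : 5 ≤ p) {m : ℕ} (hm : m ≠ 0) :
    min m 3 ≤ m - padicValNat p m := by
  set v := padicValNat p m
  have hpv : p ^ v ≤ m := Nat.le_of_dvd (Nat.pos_of_ne_zero hm) pow_padicValNat_dvd
  have h5p : 5 ^ v ≤ p ^ v := Nat.pow_le_pow_left hp5 v
  have hbern : 1 + v * 4 ≤ 5 ^ v := by
    exact_mod_cast one_add_mul_le_pow (a := (4 : ℤ)) (by norm_num) v
  omega

section Prime

variable {p : ℕ} [hp : Fact p.Prime]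

namespace Padic

theorem norm_natCast_inv_le_of_prime {q : ℕ} (hq : q.Prime) : ‖(q : ℚ_[p])⁻¹‖ ≤ p := by
  have hp1 : (1 : ℝ) ≤ p := mod_cast hp.out.one_lt.le
  rcases eq_or_ne p q with rfl | hpq
  · rw [norm_inv, norm_p, inv_inv]
  · rw [norm_inv, norm_natCast_eq_one_iff.2 ((Nat.coprime_primes hp.out hq).2 hpq), inv_one]
    exact hp1

theorem norm_bernoulli_le (n : ℕ) : ‖(bernoulli n : ℚ_[p])‖ ≤ p := by
  have hp1 : (1 : ℝ) ≤ p := mod_cast hp.out.one_lt.le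
  obtain ⟨k, rfl⟩ | hodd := Nat.even_or_odd n
  · obtain ⟨z, hz⟩ := Bernoulli.vonStaudt_clausen k
    rw [← two_mul, eq_sub_of_add_eq hz.symm]
    push_cast
    refine IsUltrametricDist.norm_sub_le_of_le ((norm_int_le_one z).trans hp1) ?_
    refine IsUltrametricDist.norm_sum_le_of_forall_le_of_nonneg (by positivity) fun q hq => ?_
    rw [one_div]
    exact norm_natCast_inv_le_of_prime (mem_filter.1 hq).2.1
  · rcases (show 1 < n ∨ n = 1 by obtain ⟨m, rfl⟩ := hodd; omega) with h | rfl
    · simp [bernoulli_eq_zero_of_odd hodd h]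
    · rw [bernoulli_one]
      push_cast
      rw [neg_div, norm_neg, one_div]
      exact_mod_cast norm_natCast_inv_le_of_prime Nat.prime_two

theorem norm_p_pow_div_natCast {m : ℕ} (hm : m ≠ 0) :
    ‖(p : ℚ_[p]) ^ m / m‖ = (p : ℝ)⁻¹ ^ (m - padicValNat p m) := by
  have hv : padicValNat p m ≤ m := (Nat.lt_pow_self hp.out.one_lt).le.trans
    (Nat.le_of_dvd (Nat.pos_of_ne_zero hm) pow_padicValNat_dvd)
  rw [norm_div, norm_p_pow, norm_eq_zpow_neg_valuation (by exact_mod_cast hm), valuation_natCast,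
    ← zpow_sub₀ (by exact_mod_cast hp.out.ne_zero), inv_pow, ← zpow_natCast, ← zpow_neg]
  congr 1
  push_cast [hv]
  ring

theorem norm_div_p_le {x : ℚ_[p]} {n : ℕ} (h : ‖x‖ ≤ (p : ℝ)⁻¹ ^ (n + 1)) :
    ‖x / p‖ ≤ (p : ℝ)⁻¹ ^ n := by
  rwa [norm_div, norm_p, div_le_iff₀ (inv_pos.2 (by exact_mod_cast hp.out.pos)), ← pow_succ]

theorem norm_faulhaberTerm_le (hp5 : 5 ≤ p) {n i : ℕ} (hi : i ≤ n) :
    ‖(faulhaberTerm p n i : ℚ_[p])‖ ≤ p * (p : ℝ)⁻¹ ^ min (n + 1 - i) 3 := by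
  have hm : n + 1 - i ≠ 0 := by omega
  simp only [faulhaberTerm, Rat.cast_div, Rat.cast_mul, Rat.cast_pow, Rat.cast_natCast]
  rw [mul_div_assoc, norm_mul, norm_mul, norm_p_pow_div_natCast hm]
  refine mul_le_mul ?_ ?_ (by positivity) (by positivity)
  · calc ‖(bernoulli i : ℚ_[p])‖ * ‖((n.choose i : ℕ) : ℚ_[p])‖ ≤ p * 1 :=
          mul_le_mul (norm_bernoulli_le i) (IsUltrametricDist.norm_natCast_le_one _ _)
            (norm_nonneg _) (by positivity)
      _ = p := mul_one _
  · exact pow_le_pow_of_le_one (by positivity) (Nat.cast_inv_le_one p)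
      (min_three_le_sub_padicValNat hp5 hm)

theorem norm_sum_range_pow_le_of_bernoulli_eq_zero (hp5 : 5 ≤ p) {n : ℕ}
    (hn : bernoulli n = 0) :
    ‖∑ a ∈ range p, (a : ℚ_[p]) ^ n‖ ≤ (p : ℝ)⁻¹ := by
  have h := congrArg (Rat.cast : ℚ → ℚ_[p]) (sum_range_pow_sub_mul_bernoulli p n)
  simp only [hn, mul_zero, sub_zero, Rat.cast_sum, Rat.cast_pow, Rat.cast_natCast] at h
  rw [h]
  refine IsUltrametricDist.norm_sum_le_of_forall_le_of_nonneg (by positivity) fun i hi => ?_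
  have hi : i < n := mem_range.1 hi
  calc _ ≤ p * (p : ℝ)⁻¹ ^ min (n + 1 - i) 3 := norm_faulhaberTerm_le hp5 hi.le
    _ ≤ p * (p : ℝ)⁻¹ ^ 2 := mul_le_mul_of_nonneg_left
        (pow_le_pow_of_le_one (by positivity) (Nat.cast_inv_le_one p) (by omega)) (by positivity)
    _ = (p : ℝ)⁻¹ := by field_simp

theorem norm_sum_range_pow_div_sub_bernoulli_le (hp5 : 5 ≤ p) {n : ℕ}
    (hn : bernoulli (n - 1) = 0) :
    ‖(∑ a ∈ range p, (a : ℚ_[p]) ^ n) / p - bernoulli n‖ ≤ (p : ℝ)⁻¹ := by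
  have h := congrArg (Rat.cast : ℚ → ℚ_[p]) (sum_range_pow_sub_mul_bernoulli p n)
  simp only [Rat.cast_sub, Rat.cast_mul, Rat.cast_sum, Rat.cast_pow, Rat.cast_natCast] at h
  rw [div_sub' (by exact_mod_cast hp.out.ne_zero), h, ← pow_one (p : ℝ)⁻¹]
  refine norm_div_p_le (IsUltrametricDist.norm_sum_le_of_forall_le_of_nonneg (by positivity)
    fun i hi => ?_)
  have hi : i < n := mem_range.1 hi
  rcases (show i = n - 1 ∨ i < n - 1 by omega) with rfl | hi'
  · simp [faulhaberTerm, hn]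
  · calc _ ≤ p * (p : ℝ)⁻¹ ^ min (n + 1 - i) 3 := norm_faulhaberTerm_le hp5 hi.le
      _ = (p : ℝ)⁻¹ ^ 2 := by
        have hp0 : (p : ℝ) ≠ 0 := by exact_mod_cast hp.out.ne_zero
        rw [show min (n + 1 - i) 3 = 3 by omega]
        field_simp

end Padic

namespace PadicInt

theorem p_dvd_pow_p_sub_self (a : ℤ_[p]) : (p : ℤ_[p]) ∣ a ^ p - a := by
  rw [← Ideal.mem_span_singleton, ← maximalIdeal_eq_span_p, ← ker_toZMod, RingHom.mem_ker,
    map_sub, map_pow, ZMod.pow_card, sub_self]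

theorem sq_dvd_pow_mul_sq_sub {x a : ℤ_[p]} (hx : x ^ p = x) (hxa : (p : ℤ_[p]) ∣ x - a)
    (k : ℕ) : (p : ℤ_[p]) ^ 2 ∣ x ^ k * a ^ 2 - ((1 - k) * a ^ (k + 2) + k * a ^ (k + 1 + p)) := by
  have hx_ap : (p : ℤ_[p]) ^ 2 ∣ x - a ^ p := by
    simpa [hx] using dvd_sub_pow_of_dvd_sub hxa 1
  have hfermat : (p : ℤ_[p]) ^ 2 ∣ (a ^ p - a) ^ 2 :=
    pow_dvd_pow_of_dvd (p_dvd_pow_p_sub_self a) 2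
  have h : x ^ k * a ^ 2 - ((1 - k) * a ^ (k + 2) + k * a ^ (k + 1 + p)) =
      (x ^ k - (a ^ p) ^ k) * a ^ 2 +
        a * (a * ((a ^ p) ^ k - a ^ k) - k * a ^ k * (a ^ p - a)) := by
    ring
  rw [h]
  exact dvd_add (dvd_mul_of_dvd_left (hx_ap.trans (sub_dvd_pow_sub_pow _ _ k)) _)
    (dvd_mul_of_dvd_right (hfermat.trans (sub_sq_dvd_mul_pow_sub_pow_sub _ _ k)) _)

theorem norm_coe_le_of_pow_dvd {z : ℤ_[p]} {n : ℕ} (h : (p : ℤ_[p]) ^ n ∣ z) :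
    ‖(z : ℚ_[p])‖ ≤ (p : ℝ)⁻¹ ^ n := by
  obtain ⟨w, rfl⟩ := h
  rw [← norm_def, norm_mul, norm_pow, norm_p]
  exact mul_le_of_le_one_right (by positivity) (norm_le_one w)

theorem norm_p_mul_pow_mul_bernoulliTwo_sub_le (hp5 : 5 ≤ p) {x : ℤ_[p]} {a : ℕ}
    (hx : x ^ p = x) (hxa : ‖(x : ℚ_[p]) - a‖ ≤ (p : ℝ)⁻¹) (k : ℕ) :
    ‖(p : ℚ_[p]) * ((x : ℚ_[p]) ^ k * (((a : ℚ_[p]) / p) ^ 2 - a / p + 1 / 6)) -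
        ((1 - k) * (a : ℚ_[p]) ^ (k + 2) + k * (a : ℚ_[p]) ^ (k + 1 + p)) / p +
        (a : ℚ_[p]) ^ (k + 1)‖ ≤ (p : ℝ)⁻¹ := by
  have hdvd : (p : ℤ_[p]) ∣ x - (a : ℤ_[p]) := by
    rw [← norm_lt_one_iff_dvd, norm_def]
    push_cast
    exact hxa.trans_lt (inv_lt_one_of_one_lt₀ (by exact_mod_cast hp.out.one_lt))
  have h1 := Padic.norm_div_p_le (n := 1)
    (norm_coe_le_of_pow_dvd (sq_dvd_pow_mul_sq_sub hx hdvd k))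
  have h2 := norm_coe_le_of_pow_dvd (n := 1) (z := (x ^ k - (a : ℤ_[p]) ^ k) * (a : ℤ_[p]))
    (by rw [pow_one]; exact dvd_mul_of_dvd_left (hdvd.trans (sub_dvd_pow_sub_pow x a k)) _)
  have h6 : ‖((6 : ℕ) : ℚ_[p])‖ = 1 := by
    refine Padic.norm_natCast_eq_one_iff.2 (Nat.Coprime.mul_right (m := 2) (n := 3) ?_ ?_) <;>
      exact (Nat.coprime_primes hp.out (by norm_num)).2 (by omega)
  have h3 : ‖(p : ℚ_[p]) * (x : ℚ_[p]) ^ k / (6 : ℕ)‖ ≤ (p : ℝ)⁻¹ := by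
    rw [norm_div, h6, div_one, norm_mul, Padic.norm_p, norm_pow, ← norm_def]
    exact mul_le_of_le_one_right (by positivity) (pow_le_one₀ (norm_nonneg _) (norm_le_one x))
  rw [pow_one] at h1 h2
  push_cast at h1 h2 h3
  have hp0 : (p : ℚ_[p]) ≠ 0 := by exact_mod_cast hp.out.ne_zero
  have h : (p : ℚ_[p]) * ((x : ℚ_[p]) ^ k * (((a : ℚ_[p]) / p) ^ 2 - a / p + 1 / 6)) -
        ((1 - k) * (a : ℚ_[p]) ^ (k + 2) + k * (a : ℚ_[p]) ^ (k + 1 + p)) / p +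
        (a : ℚ_[p]) ^ (k + 1) =
      ((x : ℚ_[p]) ^ k * a ^ 2 - ((1 - k) * a ^ (k + 2) + k * a ^ (k + 1 + p))) / p -
        ((x : ℚ_[p]) ^ k - a ^ k) * a + p * (x : ℚ_[p]) ^ k / 6 := by
    field_simp
    ring
  rw [h]
  exact IsUltrametricDist.norm_add_le_of_le (IsUltrametricDist.norm_sub_le_of_le h1 h2) h3

end PadicInt

theorem norm_mul_sum_teichmuller_pow_mul_bernoulliTwo_sub_le (hp5 : 5 ≤ p) (ω : ℕ → ℤ_[p])
    (hω : ∀ a : ℕ, 1 ≤ a → a ≤ p - 1 → ω a ^ p = ω a ∧ ‖((ω a : ℚ_[p]) - a)‖ ≤ (p : ℝ)⁻¹)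
    {k : ℕ} (hk : Even k) (hk0 : k ≠ 0) :
    ‖(p : ℚ_[p]) * ∑ a ∈ Icc 1 (p - 1),
        (ω a : ℚ_[p]) ^ k * (((a : ℚ_[p]) / p) ^ 2 - (a : ℚ_[p]) / p + 1 / 6) -
      ((1 - k) * (bernoulli (k + 2) : ℚ_[p]) + k * (bernoulli (k + 1 + p) : ℚ_[p]))‖ ≤
      (p : ℝ)⁻¹ := by
  have hb : bernoulli (k + 1) = 0 := bernoulli_eq_zero_of_odd hk.add_one (by omega)
  have hb' : bernoulli (k + 1 + p - 1) = 0 := by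
    rw [show k + 1 + p - 1 = k + p by omega]
    exact bernoulli_eq_zero_of_odd (hk.add_odd (hp.out.odd_of_ne_two (by omega))) (by omega)
  have hsum : ∀ n ≠ 0, ∑ a ∈ Icc 1 (p - 1), (a : ℚ_[p]) ^ n = ∑ a ∈ range p, (a : ℚ_[p]) ^ n :=
    fun n hn => sum_Icc_pow_eq_sum_range_pow p hn
  set S : ℕ → ℚ_[p] := fun n => ∑ a ∈ range p, (a : ℚ_[p]) ^ n
  have key : (p : ℚ_[p]) * ∑ a ∈ Icc 1 (p - 1),
        (ω a : ℚ_[p]) ^ k * (((a : ℚ_[p]) / p) ^ 2 - (a : ℚ_[p]) / p + 1 / 6) -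
      ((1 - k) * (bernoulli (k + 2) : ℚ_[p]) + k * (bernoulli (k + 1 + p) : ℚ_[p])) =
      ∑ a ∈ Icc 1 (p - 1), ((p : ℚ_[p]) * ((ω a : ℚ_[p]) ^ k *
          (((a : ℚ_[p]) / p) ^ 2 - a / p + 1 / 6)) -
        ((1 - k) * (a : ℚ_[p]) ^ (k + 2) + k * (a : ℚ_[p]) ^ (k + 1 + p)) / p +
        (a : ℚ_[p]) ^ (k + 1)) - S (k + 1) + (S (k + 2) / p - bernoulli (k + 2)) +
      k * ((S (k + 1 + p) / p - bernoulli (k + 1 + p)) - (S (k + 2) / p - bernoulli (k + 2))) := by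
    rw [sum_add_distrib, sum_sub_distrib, ← mul_sum, ← sum_div, sum_add_distrib, ← mul_sum,
      ← mul_sum, hsum _ (by omega), hsum _ (by omega), hsum _ (by omega)]
    ring
  rw [key]
  refine IsUltrametricDist.norm_add_le_of_le (IsUltrametricDist.norm_add_le_of_le
    (IsUltrametricDist.norm_sub_le_of_le ?_
      (Padic.norm_sum_range_pow_le_of_bernoulli_eq_zero hp5 hb))
    (Padic.norm_sum_range_pow_div_sub_bernoulli_le hp5 hb))
    ((IsUltrametricDist.norm_natCast_mul_le _ _).trans (IsUltrametricDist.norm_sub_le_of_le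
      (Padic.norm_sum_range_pow_div_sub_bernoulli_le hp5 hb')
      (Padic.norm_sum_range_pow_div_sub_bernoulli_le hp5 hb)))
  refine IsUltrametricDist.norm_sum_le_of_forall_le_of_nonneg (by positivity) fun a ha => ?_
  obtain ⟨ha1, ha2⟩ := mem_Icc.1 ha
  exact PadicInt.norm_p_mul_pow_mul_bernoulliTwo_sub_le hp5 (hω a ha1 ha2).1 (hω a ha1 ha2).2 k

end Prime

theorem Bprime_two_congruence_general (p : ℕ) [Fact p.Prime]
    (ω : ℕ → ℤ_[p])
    (hω : ∀ a : ℕ, 1 ≤ a → a ≤ p - 1 → ω a ^ p = ω a ∧ ‖((ω a : ℚ_[p]) - a)‖ ≤ (p : ℝ)⁻¹)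
    (j : ℕ) (hj1 : 1 ≤ j) (hj2 : j ≤ (p - 3) / 2) :
    ‖(p : ℚ_[p]) * ∑ a ∈ Finset.Icc 1 (p - 1),
        ((ω a : ℚ_[p])) ^ (4 * j) *
          (((a : ℚ_[p]) / p) ^ 2 - (a : ℚ_[p]) / p + 1 / 6) -
      (((1 - 4 * (j : ℚ)) * bernoulli (4 * j + 2) +
        4 * (j : ℚ) * bernoulli (4 * j + 1 + p) : ℚ) : ℚ_[p])‖ ≤ (p : ℝ)⁻¹ := by
  have hp5 : 5 ≤ p := by omega
  have h := norm_mul_sum_teichmuller_pow_mul_bernoulliTwo_sub_le hp5 ω hω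
    (k := 4 * j) ⟨2 * j, by ring⟩ (by omega)
  push_cast at h ⊢
  exact h

/-- Let `p` be an odd prime and `ω` the Teichmüller character mod `p` (characterized by
`ω(a)^p = ω(a)` and `ω(a) ≡ a mod p`).  For `1 ≤ j ≤ (p-3)/2` with `(p-1) ∤ (4j+2)`,
`B'_{2,ω^{4j}} := p·∑_{a=1}^{p-1} ω(a)^{4j}·B₂(a/p)` satisfies
`B'_{2,ω^{4j}} ≡ (1-4j)·b_{4j+2} + 4j·b_{4j+1+p} (mod p)` in `ℤ_p`, where
`B₂(x) = x² - x + 1/6` and `b_n` are the Bernoulli numbers. -/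
theorem Bprime_two_congruence (p : ℕ) [Fact p.Prime] (hp : Odd p)
    (ω : ℕ → ℤ_[p])
    (hω : ∀ a : ℕ, 1 ≤ a → a ≤ p - 1 → ω a ^ p = ω a ∧ ‖((ω a : ℚ_[p]) - a)‖ ≤ (p : ℝ)⁻¹)
    (j : ℕ) (hj1 : 1 ≤ j) (hj2 : j ≤ (p - 3) / 2) (hdvd : ¬ (p - 1) ∣ (4 * j + 2)) :
    ‖(p : ℚ_[p]) * ∑ a ∈ Finset.Icc 1 (p - 1),
        ((ω a : ℚ_[p])) ^ (4 * j) *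
          (((a : ℚ_[p]) / p) ^ 2 - (a : ℚ_[p]) / p + 1 / 6) -
      (((1 - 4 * (j : ℚ)) * bernoulli (4 * j + 2) +
        4 * (j : ℚ) * bernoulli (4 * j + 1 + p) : ℚ) : ℚ_[p])‖ ≤ (p : ℝ)⁻¹ :=
  Bprime_two_congruence_general p ω hω j hj1 hj2
end
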